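/- arXiv:2302.01484 — 2 statements merged into one kernel-verified Lean document; each statement's English description precedes it below -/
import Mathlib

section
/- Let ρ ≥ 2 and d ≥ 1 be integers with (ρ,d) ≠ (2,1), and set N = ρd/2, m = d/2 (as real numbers). Then the sequence Q_i = ((N+2i−1)/(N+i−1))·((N)_i·(N−m)_i)/((m)_i·i!) is strictly increasing: Q_i < Q_{i+1} for every natural number i. -/
/-- The ascending Pochhammer symbol `(x)_n = x (x+1) ⋯ (x+n-1)` for a real `x`. -/
noncomputable def poch (x : ℝ) (n : ℕ) : ℝ := (ascPochhammer ℝ n).eval x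

lemma poch_succ' (x : ℝ) (n : ℕ) : poch x (n + 1) = poch x n * (x + n) := by
  simp [poch, ascPochhammer_succ_right]

lemma poch_pos' {x : ℝ} (hx : 0 < x) (n : ℕ) : 0 < poch x n :=
  ascPochhammer_pos n x hx

theorem stmt_1 (ρ d : ℤ) (hρ : 2 ≤ ρ) (hd : 1 ≤ d) (hne : ¬(ρ = 2 ∧ d = 1))
    (N m : ℝ) (hN : N = (ρ : ℝ) * (d : ℝ) / 2) (hm : m = (d : ℝ) / 2)
    (Q : ℕ → ℝ)
    (hQ : ∀ i : ℕ, Q i =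
      ((N + 2 * i - 1) / (N + i - 1)) * (poch N i * poch (N - m) i) /
        (poch m i * (Nat.factorial i : ℝ))) :
    ∀ i : ℕ, Q i < Q (i + 1) := by
  have hρd : (3 : ℤ) ≤ ρ * d := by
    rcases eq_or_lt_of_le hρ with h2 | h3
    · have hd2 : 2 ≤ d := by
        rcases eq_or_lt_of_le hd with h1 | h
        · exact absurd ⟨h2.symm, h1.symm⟩ hne
        · omega
      nlinarith
    · nlinarith
  have hρdR : (3 : ℝ) ≤ (ρ : ℝ) * (d : ℝ) := by exact_mod_cast hρd
  have hdR : (1 : ℝ) ≤ (d : ℝ) := by exact_mod_cast hd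
  have hρR : (2 : ℝ) ≤ (ρ : ℝ) := by exact_mod_cast hρ
  have hN1 : (3 / 2 : ℝ) ≤ N := by rw [hN]; linarith
  have hm0 : (1 / 2 : ℝ) ≤ m := by rw [hm]; linarith
  have hmN : 2 * m ≤ N := by rw [hN, hm]; nlinarith
  intro i
  have hi : (0 : ℝ) ≤ (i : ℝ) := Nat.cast_nonneg i
  have hpN := poch_pos' (show (0:ℝ) < N by linarith) i
  have hpNm := poch_pos' (show (0:ℝ) < N - m by linarith) i
  have hpm := poch_pos' (show (0:ℝ) < m by linarith) i
  have hf : (0 : ℝ) < (Nat.factorial i : ℝ) := by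
    exact_mod_cast Nat.factorial_pos i
  have key : (N + 2 * i - 1) * ((m + i) * (i + 1)) <
      (N + 2 * i + 1) * ((N - m + i) * (N + i - 1)) := by
    nlinarith [mul_nonneg (mul_nonneg (show (0:ℝ) ≤ N - 2*m by linarith) hi) hi,
      mul_nonneg (show (0:ℝ) ≤ N - 2*m by linarith) hi,
      mul_nonneg hi hi, sq_nonneg (N - 1),
      mul_nonneg (mul_nonneg hi hi) hi]
  have e1 : Q i = ((N + 2 * i - 1) * (poch N i * poch (N - m) i)) /
      ((N + i - 1) * (poch m i * (Nat.factorial i : ℝ))) := by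
    rw [hQ i, div_mul_eq_mul_div, div_div]
  have e2 : Q (i + 1) = ((N + 2 * i + 1) * ((poch N i * (N + i)) * (poch (N - m) i * (N - m + i)))) /
      ((N + i) * ((poch m i * (m + i)) * ((Nat.factorial i : ℝ) * (i + 1)))) := by
    have h1 : N + ((i:ℝ) + 1) - 1 = N + i := by ring
    rw [hQ (i + 1), poch_succ', poch_succ', poch_succ', Nat.factorial_succ]
    push_cast [h1]
    rw [div_mul_eq_mul_div, div_div]
    congr 1
    · ring
    · ring
  rw [e1, e2]
  have hden1 : (0 : ℝ) < (N + i - 1) * (poch m i * (Nat.factorial i : ℝ)) := by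
    apply mul_pos (by linarith) (mul_pos hpm hf)
  have hden2 : (0 : ℝ) < (N + i) * ((poch m i * (m + i)) * ((Nat.factorial i : ℝ) * (i + 1))) := by
    apply mul_pos (by linarith)
    exact mul_pos (mul_pos hpm (by linarith)) (mul_pos hf (by linarith))
  rw [div_lt_div_iff₀ hden1 hden2]
  have hC : (0 : ℝ) < (poch N i * poch (N - m) i) * (poch m i * (Nat.factorial i : ℝ)) *
      (poch m i * (Nat.factorial i : ℝ)) * (N + i) := by
    positivity
  nlinarith [mul_lt_mul_of_pos_left key hC]
end

section
/- Let ρ ≥ 2 and d ≥ 1 be integers, set N = ρd/2 and m = d/2 (as real numbers), and let s ≥ 1 be an integer. Then (s/(N+2s−1))·Q_s ≤ ((s+1)/(N+2s+1))·Q_{s+1}, where Q_i = ((N+2i−1)/(N+i−1))·((N)_i·(N−m)_i)/((m)_i·i!). In other words, the function s ↦ s·Q_s/(N+2s−1) is nondecreasing in s. -/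
theorem stmt_9 (ρ d : ℤ) (hρ : 2 ≤ ρ) (hd : 1 ≤ d)
    (N m : ℝ) (hN : N = (ρ : ℝ) * (d : ℝ) / 2) (hm : m = (d : ℝ) / 2)
    (Q : ℕ → ℝ)
    (hQ : ∀ i : ℕ, Q i =
      ((N + 2 * i - 1) / (N + i - 1)) * (poch N i * poch (N - m) i) /
        (poch m i * (Nat.factorial i : ℝ)))
    (s : ℕ) (hs : 1 ≤ s) :
    ((s : ℝ) / (N + 2 * s - 1)) * Q s ≤
      (((s : ℝ) + 1) / (N + 2 * s + 1)) * Q (s + 1) := by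
  have hρ' : (2:ℝ) ≤ ρ := by exact_mod_cast hρ
  have hd' : (1:ℝ) ≤ d := by exact_mod_cast hd
  have hs' : (1:ℝ) ≤ s := by exact_mod_cast hs
  have hm0 : (1:ℝ)/2 ≤ m := by rw [hm]; linarith
  have hNm : m ≤ N - m := by rw [hN, hm]; nlinarith
  have hN1 : (1:ℝ) ≤ N := by rw [hN]; nlinarith
  have hA : 0 < poch N s := ascPochhammer_pos s N (by linarith)
  have hB : 0 < poch (N - m) s := ascPochhammer_pos s _ (by linarith)
  have hC : 0 < poch m s := ascPochhammer_pos s m (by linarith)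
  have hF : 0 < (Nat.factorial s : ℝ) := by positivity
  have e1 : poch N (s+1) = poch N s * (N + s) := by
    simp [poch, ascPochhammer_succ_eval]
  have e2 : poch (N - m) (s+1) = poch (N - m) s * (N - m + s) := by
    simp [poch, ascPochhammer_succ_eval]
  have e3 : poch m (s+1) = poch m s * (m + s) := by
    simp [poch, ascPochhammer_succ_eval]
  have key : (s:ℝ) * (m + s) ≤ (N + s - 1) * (N - m + s) := by
    nlinarith [mul_nonneg (by linarith : (0:ℝ) ≤ N - m - 1/2)
      (by linarith : (0:ℝ) ≤ N + 2*s - 1)]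
  have h1 : (0:ℝ) < N + s - 1 := by linarith
  have h2 : (0:ℝ) < N + 2*s - 1 := by linarith
  have h3 : (0:ℝ) < N + 2*s + 1 := by linarith
  have h4 : (0:ℝ) < m + s := by linarith
  have L : ((s : ℝ) / (N + 2 * s - 1)) * Q s
      = (s : ℝ) * (poch N s * poch (N - m) s) / ((N + s - 1) * (poch m s * s.factorial)) := by
    rw [hQ]
    field_simp
    ring_nf
    have h2' : (-1 + N + (s:ℝ)*2) ≠ 0 := by linarith
    field_simp
    ring
  have R : (((s : ℝ) + 1) / (N + 2 * s + 1)) * Q (s+1)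
      = (N - m + s) * (poch N s * poch (N - m) s) / ((m + s) * (poch m s * s.factorial)) := by
    rw [hQ, e1, e2, e3, Nat.factorial_succ]
    push_cast
    have h5 : (0:ℝ) < N + s := by linarith
    have h6 : N + 2 * ((s:ℝ)+1) - 1 = N + 2*s + 1 := by ring
    have h7 : N + ((s:ℝ)+1) - 1 = N + s := by ring
    rw [h6, h7]
    field_simp
  rw [L, R, div_le_div_iff₀ (by positivity) (by positivity)]
  nlinarith [mul_le_mul_of_nonneg_right key
    (le_of_lt (by positivity : (0:ℝ) < poch N s * poch (N - m) s * (poch m s * s.factorial)))]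
end
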